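/- arXiv:1402.5517 — 3 statements merged into one kernel-verified Lean document; each statement's English description precedes it below -/
import Mathlib

section
/- Let n be a positive integer, let A be an n×n real matrix, and let s, t ∈ ℝ. If the matrices I − tA and I − (t+s)A are both invertible, then I − s·μ_t(A) is invertible and μ_s(μ_t(A)) = μ_{t+s}(A); explicitly, (I − s·(I − tA)⁻¹A)⁻¹ · ((I − tA)⁻¹A) = (I − (t+s)A)⁻¹A. (Paper's Lemma II.3.6: the special Möbius transformations μ_t form a one-parameter semigroup, where defined.) -/
/-- Lemma II.3.6: the special Möbius transformations `μ_t(A) = (I - tA)⁻¹A` form a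
one-parameter semigroup where defined: if `I - tA` and `I - (t+s)A` are invertible, then
`I - s·μ_t(A)` is invertible and `μ_s(μ_t(A)) = μ_{t+s}(A)`. -/
theorem mobius_semigroup (n : ℕ) (hn : 0 < n) (A : Matrix (Fin n) (Fin n) ℝ) (s t : ℝ)
    (h1 : IsUnit (1 - t • A)) (h2 : IsUnit (1 - (t + s) • A)) :
    IsUnit (1 - s • ((1 - t • A)⁻¹ * A)) ∧
      (1 - s • ((1 - t • A)⁻¹ * A))⁻¹ * ((1 - t • A)⁻¹ * A) = (1 - (t + s) • A)⁻¹ * A := by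
  set B := 1 - t • A with hB
  set C := 1 - (t + s) • A with hC
  have hBB : B * B⁻¹ = 1 := Matrix.mul_nonsing_inv B ((Matrix.isUnit_iff_isUnit_det B).mp h1)
  have key : 1 - s • (B⁻¹ * A) = B⁻¹ * C := by
    have : B * (1 - s • (B⁻¹ * A)) = C := by
      rw [Matrix.mul_sub, Matrix.mul_smul, ← Matrix.mul_assoc, hBB, Matrix.one_mul,
        Matrix.mul_one, hB, hC, add_smul]
      abel
    calc 1 - s • (B⁻¹ * A) = B⁻¹ * (B * (1 - s • (B⁻¹ * A))) := by
          rw [← Matrix.mul_assoc, Matrix.nonsing_inv_mul B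
            ((Matrix.isUnit_iff_isUnit_det B).mp h1), Matrix.one_mul]
      _ = B⁻¹ * C := by rw [this]
  have hu : IsUnit (1 - s • (B⁻¹ * A)) := by
    rw [key]; rw [Matrix.isUnit_iff_isUnit_det, Matrix.det_mul]
    exact (Matrix.isUnit_nonsing_inv_det B ((Matrix.isUnit_iff_isUnit_det B).mp h1)).mul
      ((Matrix.isUnit_iff_isUnit_det C).mp h2)
  refine ⟨hu, ?_⟩
  rw [key, Matrix.mul_inv_rev, Matrix.nonsing_inv_nonsing_inv B
    ((Matrix.isUnit_iff_isUnit_det B).mp h1), Matrix.mul_assoc, ← Matrix.mul_assoc B,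
    hBB, Matrix.one_mul]
end

section
/- Let E be a real inner product space, let x, x′ ∈ E with x ≠ x′, and let v, v′ ∈ E be unit vectors such that ⟪x′ − x, v⟫ ≤ 0 and ⟪x − x′, v′⟫ ≤ 0. Then for all t, t′ ≥ 0 we have x + t·v ≠ x′ + t′·v′; that is, the closed normal half-rays {x + t·v : t ≥ 0} and {x′ + t′·v′ : t′ ≥ 0} are disjoint. (This is the key step in the proof of Proposition 6.8 showing that the global radial flow restricted to B_∞ is injective: if x and x′ are distinct boundary points at which the height functions in the outward unit normal directions v and v′ attain their absolute maxima over the boundary, then in particular ⟪x′, v⟫ ≤ ⟪x, v⟫ and ⟪x, v′⟫ ≤ ⟪x′, v′⟫, and the outward normal half-lines from x and x′ do not intersect.) -/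
open scoped RealInnerProductSpace

/-- Key step in the proof of Proposition 6.8 (injectivity of the global radial flow on
`B_∞`): if `x ≠ x′` and `v, v′` are unit vectors with `⟪x′ − x, v⟫ ≤ 0` and
`⟪x − x′, v′⟫ ≤ 0`, then the closed half-rays `{x + t·v : t ≥ 0}` and
`{x′ + t′·v′ : t′ ≥ 0}` are disjoint. -/
theorem normal_rays_disjoint {E : Type*} [NormedAddCommGroup E] [InnerProductSpace ℝ E]
    (x x' v v' : E) (hx : x ≠ x') (hv : ‖v‖ = 1) (hv' : ‖v'‖ = 1)
    (h1 : ⟪x' - x, v⟫ ≤ 0) (h2 : ⟪x - x', v'⟫ ≤ 0) :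
    ∀ t t' : ℝ, 0 ≤ t → 0 ≤ t' → x + t • v ≠ x' + t' • v' := by
  intro t t' ht ht' heq
  have hd : x' - x = t • v - t' • v' := by
    have h := heq
    rw [← sub_eq_zero] at h ⊢
    have e : x' - x - (t • v - t' • v') = -(x + t • v - (x' + t' • v')) := by abel
    rw [e, h, neg_zero]
  have key : ⟪x' - x, x' - x⟫ ≤ 0 := by
    nth_rewrite 2 [hd]
    rw [inner_sub_right, inner_smul_right, inner_smul_right]
    have h2' : 0 ≤ ⟪x' - x, v'⟫ := by
      have : ⟪x - x', v'⟫ = -⟪x' - x, v'⟫ := by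
        rw [← inner_neg_left]; rw [neg_sub]
      linarith [this ▸ h2]
    nlinarith [mul_nonneg ht' h2', mul_nonpos_of_nonneg_of_nonpos ht h1]
  have : x' - x = 0 := by
    have := real_inner_self_nonneg (x := x' - x)
    have : ⟪x' - x, x' - x⟫ = 0 := le_antisymm key this
    exact inner_self_eq_zero.mp this
  exact hx (sub_eq_zero.mp this).symm
end

section
/- Let n ≥ 0 and 1 ≤ k ≤ n+1, and in Euclidean space ℝ^{n+1} consider the corner region C_k = {x ∈ ℝ^{n+1} : xⱼ ≥ 0 for all j ≤ k} with boundary ∂C_k = {x ∈ C_k : xⱼ = 0 for some j ≤ k}. Let u ∈ ℝ^{n+1} satisfy uⱼ > 0 for all j ≤ k, and set m = min{uⱼ : 1 ≤ j ≤ k}. Then a point p ∈ ∂C_k satisfies ‖u − p‖ = dist(u, ∂C_k) if and only if there is some j ≤ k with uⱼ = m and p is obtained from u by replacing its j-th coordinate by 0. Consequently, u has more than one nearest point on ∂C_k if and only if there exist i ≠ j with i, j ≤ k and uᵢ = uⱼ = m. (This identifies the Blum medial axis of the corner model C_k — the locus of interior points with multiple closest boundary points — as the set {u : uᵢ = uⱼ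 ≤ u_ℓ for some i ≠ j ≤ k and all ℓ ≤ k}, the local structure described by the edge-corner normal form in Definition 3.3 and Theorem 3.2.) -/
/-!
If `p ∈ ∂C` has `p j = 0` for a corner index `j`, then
`dist u p ≥ |u j - p j| = u j ≥ m`, and the first inequality is an equality only when `p`
agrees with `u` off `j`. Zeroing a minimal coordinate of `u` attains `m`, so these are exactly
the nearest points, and two of them differ iff the minimum is attained at two indices.
-/

open Metric

namespace EuclideanSpace

variable {ι : Type*} [Fintype ι]

theorem abs_sub_apply_le_dist (u p : EuclideanSpace ℝ ι) (j : ι) :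
    |u j - p j| ≤ dist u p := by
  simpa only [Real.dist_eq] using PiLp.dist_apply_le u p j

theorem dist_eq_abs_sub_apply_iff (u p : EuclideanSpace ℝ ι) (j : ι) :
    dist u p = |u j - p j| ↔ ∀ i, i ≠ j → p i = u i := by
  classical
  have hsplit : dist u p ^ 2 =
      (u j - p j) ^ 2 + ∑ i ∈ Finset.univ.erase j, (u i - p i) ^ 2 := by
    rw [EuclideanSpace.dist_eq, Real.sq_sqrt (by positivity)]
    simp only [Real.dist_eq, sq_abs]
    exact (Finset.add_sum_erase _ _ (Finset.mem_univ j)).symm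
  rw [← sq_eq_sq₀ dist_nonneg (abs_nonneg _), sq_abs, hsplit, add_eq_left,
    Finset.sum_eq_zero_iff_of_nonneg fun i _ => sq_nonneg _]
  simp only [Finset.mem_erase, Finset.mem_univ, and_true, sq_eq_zero_iff, sub_eq_zero]
  exact forall₂_congr fun _ _ => eq_comm

theorem dist_sub_single_self [DecidableEq ι] (u : EuclideanSpace ℝ ι) (j : ι) :
    dist u (u - single j (u j)) = |u j| := by
  rw [dist_eq_norm, sub_sub_cancel, PiLp.norm_single, Real.norm_eq_abs]

end EuclideanSpace

open EuclideanSpace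

section CornerBoundary

variable {ι : Type*} {P : ι → Prop}

/-- `∂C` for the corner `C = {x | ∀ j, P j → 0 ≤ x j}`; the model `C_k` is `P j := j < k`.
-/
def cornerBoundary (P : ι → Prop) : Set (EuclideanSpace ℝ ι) :=
  {p | (∀ j, P j → 0 ≤ p j) ∧ ∃ j, P j ∧ p j = 0}

theorem sub_single_mem_cornerBoundary [DecidableEq ι] {u : EuclideanSpace ℝ ι}
    (hu : ∀ j, P j → 0 ≤ u j) {j : ι} (hj : P j) :
    u - single j (u j) ∈ cornerBoundary P := by
  refine ⟨fun i hi => ?_, j, hj, by simp⟩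
  by_cases hij : i = j
  · simp [hij]
  · simpa [PiLp.single_apply, hij] using hu i hi

theorem le_dist_of_mem_cornerBoundary [Fintype ι] {u p : EuclideanSpace ℝ ι} {m : ℝ}
    (hm : IsLeast {r | ∃ j, P j ∧ r = u j} m) (hp : p ∈ cornerBoundary P) :
    m ≤ dist u p := by
  obtain ⟨-, j, hj, hpj⟩ := hp
  calc m ≤ u j := hm.2 ⟨j, hj, rfl⟩
    _ ≤ |u j - p j| := by rw [hpj, sub_zero]; exact le_abs_self _
    _ ≤ dist u p := abs_sub_apply_le_dist u p j

theorem infDist_cornerBoundary [Fintype ι] {u : EuclideanSpace ℝ ι} {m : ℝ}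
    (hu : ∀ j, P j → 0 ≤ u j)
    (hm : IsLeast {r | ∃ j, P j ∧ r = u j} m) :
    infDist u (cornerBoundary P) = m := by
  classical
  obtain ⟨j, hj, rfl⟩ := hm.1
  have hmem := sub_single_mem_cornerBoundary hu hj
  refine le_antisymm ?_ ((le_infDist ⟨_, hmem⟩).2 fun p hp =>
    le_dist_of_mem_cornerBoundary hm hp)
  calc infDist u (cornerBoundary P) ≤ dist u (u - single j (u j)) := infDist_le_dist_of_mem hmem
    _ = u j := by rw [dist_sub_single_self, abs_of_nonneg (hu j hj)]

theorem dist_eq_infDist_cornerBoundary_iff [Fintype ι] {u p : EuclideanSpace ℝ ι} {m : ℝ}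
    (hu : ∀ j, P j → 0 ≤ u j) (hm : IsLeast {r | ∃ j, P j ∧ r = u j} m)
    (hp : p ∈ cornerBoundary P) :
    dist u p = infDist u (cornerBoundary P) ↔
      ∃ j, P j ∧ u j = m ∧ p j = 0 ∧ ∀ i, i ≠ j → p i = u i := by
  rw [infDist_cornerBoundary hu hm]
  constructor
  · obtain ⟨-, j, hj, hpj⟩ := hp
    intro hd
    have hmj : m ≤ u j := hm.2 ⟨j, hj, rfl⟩
    have hj_le := abs_sub_apply_le_dist u p j
    rw [hpj, sub_zero] at hj_le
    have huj : u j = m := le_antisymm ((le_abs_self _).trans (hj_le.trans hd.le)) hmj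
    refine ⟨j, hj, huj, hpj, (dist_eq_abs_sub_apply_iff u p j).1 ?_⟩
    rw [hpj, sub_zero, hd, ← huj, abs_of_nonneg (hu j hj)]
  · rintro ⟨j, hj, huj, hpj, hpi⟩
    rw [(dist_eq_abs_sub_apply_iff u p j).2 hpi, hpj, sub_zero, huj,
      abs_of_nonneg (huj ▸ hu j hj)]

theorem exists_ne_nearest_cornerBoundary_iff [Fintype ι] {u : EuclideanSpace ℝ ι} {m : ℝ}
    (hu : ∀ j, P j → 0 < u j) (hm : IsLeast {r | ∃ j, P j ∧ r = u j} m) :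
    (∃ p ∈ cornerBoundary P, ∃ q ∈ cornerBoundary P, p ≠ q ∧
        dist u p = infDist u (cornerBoundary P) ∧ dist u q = infDist u (cornerBoundary P)) ↔
      ∃ i j, i ≠ j ∧ P i ∧ P j ∧ u i = m ∧ u j = m := by
  classical
  have hu₀ : ∀ j, P j → 0 ≤ u j := fun j hj => (hu j hj).le
  constructor
  · rintro ⟨p, hp, q, hq, hpq, hdp, hdq⟩
    obtain ⟨i, hi, hui, hpi, hp'⟩ := (dist_eq_infDist_cornerBoundary_iff hu₀ hm hp).1 hdp
    obtain ⟨j, hj, huj, hqj, hq'⟩ := (dist_eq_infDist_cornerBoundary_iff hu₀ hm hq).1 hdq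
    refine ⟨i, j, ?_, hi, hj, hui, huj⟩
    rintro rfl
    refine hpq (PiLp.ext fun l => ?_)
    by_cases hl : l = i
    · rw [hl, hpi, hqj]
    · rw [hp' l hl, hq' l hl]
  · rintro ⟨i, j, hij, hi, hj, hui, huj⟩
    have hnearest : ∀ l, P l → u l = m →
        dist u (u - single l (u l)) = infDist u (cornerBoundary P) := fun l hl hul => by
      rw [dist_sub_single_self, abs_of_nonneg (hu₀ l hl), infDist_cornerBoundary hu₀ hm, hul]
    refine ⟨_, sub_single_mem_cornerBoundary hu₀ hi, _, sub_single_mem_cornerBoundary hu₀ hj,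
      fun h => ?_, hnearest i hi hui, hnearest j hj huj⟩
    have := congrArg (· i) h
    simp only [PiLp.sub_apply, PiLp.single_eq_same, sub_self, ne_eq, hij, not_false_eq_true,
      PiLp.single_eq_of_ne, sub_zero] at this
    exact (hu i hi).ne this

end CornerBoundary

theorem corner_model_medial_axis_general (n k : ℕ) (hk1 : 1 ≤ k)
    (u : EuclideanSpace ℝ (Fin (n + 1)))
    (hu : ∀ j : Fin (n + 1), (j : ℕ) < k → 0 < u j)
    (S : Set (EuclideanSpace ℝ (Fin (n + 1))))
    (hS : S = {p | (∀ j : Fin (n + 1), (j : ℕ) < k → 0 ≤ p j) ∧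
        ∃ j : Fin (n + 1), (j : ℕ) < k ∧ p j = 0})
    (m : ℝ) (hm : m = sInf {r : ℝ | ∃ j : Fin (n + 1), (j : ℕ) < k ∧ r = u j}) :
    (∀ p ∈ S, (dist u p = Metric.infDist u S ↔
        ∃ j : Fin (n + 1), (j : ℕ) < k ∧ u j = m ∧ p j = 0 ∧
          ∀ i : Fin (n + 1), i ≠ j → p i = u i)) ∧
    ((∃ p ∈ S, ∃ q ∈ S, p ≠ q ∧
        dist u p = Metric.infDist u S ∧ dist u q = Metric.infDist u S) ↔
      ∃ i j : Fin (n + 1), i ≠ j ∧ (i : ℕ) < k ∧ (j : ℕ) < k ∧ u i = m ∧ u j = m) := by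
  set A := {r : ℝ | ∃ j : Fin (n + 1), (j : ℕ) < k ∧ r = u j}
  have hAfin : A.Finite := (Set.finite_range u).subset fun r ⟨j, _, hr⟩ => ⟨j, hr.symm⟩
  have hAne : A.Nonempty := ⟨_, ⟨0, by omega⟩, show 0 < k by omega, rfl⟩
  have hmin : IsLeast A m :=
    hm ▸ ⟨hAne.csInf_mem hAfin, fun _ hr => csInf_le hAfin.bddBelow hr⟩
  have hSB : S = cornerBoundary fun j : Fin (n + 1) => (j : ℕ) < k := hS
  subst hSB
  exact ⟨fun p hp => dist_eq_infDist_cornerBoundary_iff (fun j hj => (hu j hj).le) hmin hp,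
    exists_ne_nearest_cornerBoundary_iff hu hmin⟩

/-- Identification of the nearest boundary points in the corner model `C_k`, and hence of
the Blum medial axis of the corner model (Definition 3.3 / Theorem 3.2): for `u` interior
with `m = min{uⱼ : j < k}`, the nearest points of `u` on `∂C_k` are exactly the points
obtained from `u` by replacing a minimizing coordinate by `0`; consequently `u` has more
than one nearest boundary point iff two of the first `k` coordinates are both equal to the
minimum `m`. -/
theorem corner_model_medial_axis (n k : ℕ) (hk1 : 1 ≤ k) (hk2 : k ≤ n + 1)
    (u : EuclideanSpace ℝ (Fin (n + 1)))
    (hu : ∀ j : Fin (n + 1), (j : ℕ) < k → 0 < u j)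
    (S : Set (EuclideanSpace ℝ (Fin (n + 1))))
    (hS : S = {p | (∀ j : Fin (n + 1), (j : ℕ) < k → 0 ≤ p j) ∧
        ∃ j : Fin (n + 1), (j : ℕ) < k ∧ p j = 0})
    (m : ℝ) (hm : m = sInf {r : ℝ | ∃ j : Fin (n + 1), (j : ℕ) < k ∧ r = u j}) :
    (∀ p ∈ S, (dist u p = Metric.infDist u S ↔
        ∃ j : Fin (n + 1), (j : ℕ) < k ∧ u j = m ∧ p j = 0 ∧
          ∀ i : Fin (n + 1), i ≠ j → p i = u i)) ∧
    ((∃ p ∈ S, ∃ q ∈ S, p ≠ q ∧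
        dist u p = Metric.infDist u S ∧ dist u q = Metric.infDist u S) ↔
      ∃ i j : Fin (n + 1), i ≠ j ∧ (i : ℕ) < k ∧ (j : ℕ) < k ∧ u i = m ∧ u j = m) :=
  corner_model_medial_axis_general n k hk1 u hu S hS m hm
end
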